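/- Let p ∈ 𝔻 and λ ∈ ℂ with |λ| = 1, and let ξ_p(z) = √(1−|p|²)/(1 − conj(p)·z) and τ_p(z) = λ(p − z)/(1 − conj(p)·z), so that τ_p is an automorphism of 𝔻. Then the conjugate-linear map J W_{ξ_p,τ_p} on H², given by f ↦ conj(ξ_p(conj(z)) · f(τ_p(conj(z)))), is a conjugation on H² if and only if λp = conj(p). -/

import Mathlib

open scoped ComplexConjugate InnerProductSpace ENNReal NNReal
open Complex Metric

noncomputable section

abbrev H2 : Type := lp (fun _ : ℕ => ℂ) 2

namespace H2

/-- Evaluation of an element of `H²` (given by its sequence of Taylor coefficients)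
at a point `z` of the unit disk: `f(z) = ∑ aₙ zⁿ`. -/
def eval (f : H2) (z : ℂ) : ℂ := ∑' n : ℕ, (f : ∀ _ : ℕ, ℂ) n * z ^ n

/-- The Szegő kernel function `K_w(z) = 1/(1 - conj w * z)`. -/
def ker (w z : ℂ) : ℂ := (1 - conj w * z)⁻¹

lemma kernel_memℓp (w : ℂ) (hw : ‖w‖ < 1) :
    Memℓp (fun n : ℕ => (conj w) ^ n) 2 := by
  apply memℓp_gen
  have hsum : Summable (fun n : ℕ => (‖w‖ ^ 2) ^ n) :=
    summable_geometric_of_lt_one (by positivity) (by nlinarith [norm_nonneg w])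
  refine hsum.congr fun n => ?_
  have h2 : ((2 : ℝ≥0∞).toReal) = ((2 : ℕ) : ℝ) := by simp
  rw [h2, Real.rpow_natCast]
  simp [norm_pow, ← pow_mul, Nat.mul_comm]

/-- The reproducing kernel of `H²` at `w` in the unit disk, as an element of `H²`. -/
def kernel (w : ℂ) : H2 :=
  if hw : ‖w‖ < 1 then ⟨fun n : ℕ => (conj w) ^ n, kernel_memℓp w hw⟩ else 0

/-- `T` is the composition operator `C_φ` on `H²`. -/
def IsCompOp (φ : ℂ → ℂ) (T : H2 →L[ℂ] H2) : Prop :=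
  ∀ f : H2, ∀ z : ℂ, ‖z‖ < 1 → eval (T f) z = eval f (φ z)

/-- `W` is the weighted composition operator `W_{ψ,φ}` on `H²`. -/
def IsWCompOp (ψ φ : ℂ → ℂ) (W : H2 →L[ℂ] H2) : Prop :=
  ∀ f : H2, ∀ z : ℂ, ‖z‖ < 1 → eval (W f) z = ψ z * eval f (φ z)

/-- A conjugation on `H²`: a conjugate-linear involution satisfying `⟪Cx, Cy⟫ = ⟪y, x⟫`. -/
structure IsConjugation (C : H2 → H2) : Prop where
  map_add : ∀ x y : H2, C (x + y) = C x + C y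
  map_smul : ∀ (c : ℂ) (x : H2), C (c • x) = conj c • C x
  invol : ∀ x : H2, C (C x) = x
  inner_conj : ∀ x y : H2, ⟪C x, C y⟫_ℂ = ⟪y, x⟫_ℂ

/-- `T` is `C`-normal: `C T* T C = T T*`. -/
def CNormal (C : H2 → H2) (T : H2 →L[ℂ] H2) : Prop :=
  ∀ x : H2, C ((ContinuousLinearMap.adjoint T) (T (C x)))
      = T ((ContinuousLinearMap.adjoint T) x)

/-- `T` is a normal operator: `T* T = T T*`. -/
def IsNormalOp (T : H2 →L[ℂ] H2) : Prop :=
  (ContinuousLinearMap.adjoint T).comp T = T.comp (ContinuousLinearMap.adjoint T)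

/-- `T` is a unitary operator. -/
def IsUnitaryOp (T : H2 →L[ℂ] H2) : Prop :=
  T.comp (ContinuousLinearMap.adjoint T) = ContinuousLinearMap.id ℂ H2 ∧
  (ContinuousLinearMap.adjoint T).comp T = ContinuousLinearMap.id ℂ H2

/-- `C` is the conjugation `J_μ` on `H²`: `(J_μ f)(z) = conj (f (μ * conj z))`. -/
def IsJmu (μ : ℂ) (C : H2 → H2) : Prop :=
  ∀ f : H2, ∀ z : ℂ, ‖z‖ < 1 → eval (C f) z = conj (eval f (μ * conj z))

/-- `ξ_p(z) = √(1-|p|²) / (1 - conj p * z)`. -/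
def xi (p z : ℂ) : ℂ := (Real.sqrt (1 - ‖p‖ ^ 2) : ℂ) / (1 - conj p * z)

/-- `τ_p(z) = λ (p - z) / (1 - conj p * z)`. -/
def tau (p lam z : ℂ) : ℂ := lam * (p - z) / (1 - conj p * z)

/-- `C` is the conjugation `J W_{ξ_p, τ_p}` on `H²`:
`(C f)(z) = conj (ξ_p(conj z) * f (τ_p (conj z)))`. -/
def IsJW (p lam : ℂ) (C : H2 → H2) : Prop :=
  ∀ f : H2, ∀ z : ℂ, ‖z‖ < 1 →
    eval (C f) z = conj (xi p (conj z) * eval f (tau p lam (conj z)))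

end H2

/-!
The reproducing kernels `k_w(z) = (1 - conj w * z)⁻¹` span a dense subspace of `H²`, and
`eval f w = ⟪k_w, f⟫`. If `C = J W_{ξ_p,τ_p}` exists, it sends `k_w` to
`conj (ξ_p (conj w)) • k_{τ_p (conj w)}`. The Möbius identity
`1 - conj (τ_p a) * τ_p b = conj (ξ_p a) * ξ_p b * (1 - conj a * b)` says that these images have
the conjugated Gram matrix of the kernels, so the assignment extends to a conjugate-linear map
with `⟪C x, C y⟫ = ⟪y, x⟫`. When `λ p = conj p`, the map `conj ∘ τ_p` is an involution and
`ξ_p z * conj (ξ_p (conj (τ_p z))) = 1`, so `C² = I` on kernels, hence everywhere; then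
`eval (C f) z = ⟪C (C k_z), C f⟫ = ⟪f, C k_z⟫` is the required formula.
Conversely, evaluating `C (C 1) = 1` at `0` gives `1 - conj p * p = 1 - conj p * conj (λ p)`.
-/

open Filter Topology

theorem one_sub_mul_ne_zero_of_norm_lt_one {R : Type*} [NormedRing R] [NormOneClass R] {a b : R}
    (ha : ‖a‖ < 1) (hb : ‖b‖ ≤ 1) : 1 - a * b ≠ 0 := by
  rw [sub_ne_zero]
  intro h
  have := norm_mul_le a b
  rw [← h, norm_one] at this
  nlinarith [norm_nonneg a]

theorem eq_zero_of_tsum_mul_pow_eq_zero {𝕜 : Type*} [NontriviallyNormedField 𝕜] [CompleteSpace 𝕜]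
    {c : ℕ → 𝕜} {M : ℝ} (hc : ∀ n, ‖c n‖ ≤ M) (h : ∀ z : 𝕜, ‖z‖ < 1 → ∑' n, c n * z ^ n = 0) :
    c = 0 := by
  set q := FormalMultilinearSeries.ofScalars 𝕜 c
  have hrad : 1 ≤ q.radius := by
    refine q.le_radius_of_bound M fun n => ?_
    simpa [q, FormalMultilinearSeries.ofScalars_norm] using hc n
  have hq : HasFPowerSeriesAt q.sum q 0 :=
    (q.hasFPowerSeriesOnBall (zero_lt_one.trans_le hrad)).hasFPowerSeriesAt
  have hzero : q.sum =ᶠ[𝓝 0] 0 := by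
    filter_upwards [Metric.ball_mem_nhds (0 : 𝕜) one_pos] with z hz
    rw [← FormalMultilinearSeries.ofScalarsSum, FormalMultilinearSeries.ofScalars_sum_eq]
    simpa [mul_comm] using h z (mem_ball_zero_iff.mp hz)
  exact (FormalMultilinearSeries.ofScalars_series_eq_zero 𝕜).mp (hq.eq_zero_of_eventually hzero)

namespace Finsupp

def conjLinearCombination {ι F : Type*} [AddCommGroup F] [Module ℂ F] (g : ι → F) :
    (ι →₀ ℂ) →ₛₗ[starRingEnd ℂ] F where
  toFun c := c.sum fun i a => conj a • g i
  map_add' c d := sum_add_index' (fun i => by simp) (fun i a b => by simp [add_smul])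
  map_smul' a c := by
    rw [sum_smul_index' (fun i => by simp), smul_sum]
    simp [mul_smul]

theorem inner_conjLinearCombination {ι E F : Type*} [NormedAddCommGroup E] [InnerProductSpace ℂ E]
    [NormedAddCommGroup F] [InnerProductSpace ℂ F] {k : ι → E} {g : ι → F}
    (hg : ∀ i j, ⟪g i, g j⟫_ℂ = ⟪k j, k i⟫_ℂ) (c d : ι →₀ ℂ) :
    ⟪conjLinearCombination g c, conjLinearCombination g d⟫_ℂ =
      ⟪linearCombination ℂ k d, linearCombination ℂ k c⟫_ℂ := by
  simp only [conjLinearCombination, LinearMap.coe_mk, AddHom.coe_mk, linearCombination_apply, sum,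
    sum_inner, inner_sum, inner_smul_left, inner_smul_right, conj_conj, hg, Finset.mul_sum]
  rw [Finset.sum_comm]
  exact Finset.sum_congr rfl fun _ _ => Finset.sum_congr rfl fun _ _ => by ring

end Finsupp

open Finsupp in
theorem exists_conjLinear_extension_of_inner_eq {ι E F : Type*} [NormedAddCommGroup E]
    [InnerProductSpace ℂ E] [NormedAddCommGroup F] [InnerProductSpace ℂ F] [CompleteSpace F]
    {k : ι → E} {g : ι → F} (hk : Dense (Submodule.span ℂ (Set.range k) : Set E))
    (hg : ∀ i j, ⟪g i, g j⟫_ℂ = ⟪k j, k i⟫_ℂ) :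
    ∃ C : E →SL[starRingEnd ℂ] F, (∀ i, C (k i) = g i) ∧ ∀ x y, ⟪C x, C y⟫_ℂ = ⟪y, x⟫_ℂ := by
  set T := linearCombination ℂ k
  set S := conjLinearCombination g
  have hT : DenseRange T := by
    rw [DenseRange, ← LinearMap.coe_range, range_linearCombination]
    exact hk
  have hnorm : ∀ c, ‖S c‖ ≤ 1 * ‖T c‖ := fun c => by
    rw [one_mul, ← sq_le_sq₀ (norm_nonneg _) (norm_nonneg _), @norm_sq_eq_re_inner ℂ,
      @norm_sq_eq_re_inner ℂ, inner_conjLinearCombination hg]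
  have hext := LinearMap.extendOfNorm_eq hT ⟨1, hnorm⟩
  refine ⟨S.extendOfNorm T, fun i => ?_, fun x y => ?_⟩
  · simpa [T, S, conjLinearCombination] using hext (single i 1)
  · induction x, y using hT.induction_on₂ with
    | hp => exact isClosed_eq (by fun_prop) (by fun_prop)
    | h c d => rw [hext, hext, inner_conjLinearCombination hg]

namespace H2

theorem coe_kernel {w : ℂ} (hw : ‖w‖ < 1) : (kernel w : ℕ → ℂ) = fun n => conj w ^ n := by
  rw [kernel, dif_pos hw]

theorem eval_kernel {w z : ℂ} (hw : ‖w‖ < 1) (hz : ‖z‖ < 1) :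
    eval (kernel w) z = (1 - conj w * z)⁻¹ := by
  have hwz : ‖conj w * z‖ < 1 := by
    rw [norm_mul, RCLike.norm_conj]
    nlinarith [norm_nonneg w, norm_nonneg z]
  simp only [eval, coe_kernel hw, ← mul_pow, tsum_geometric_of_norm_lt_one hwz]

theorem inner_kernel (f : H2) {w : ℂ} (hw : ‖w‖ < 1) : ⟪kernel w, f⟫_ℂ = eval f w := by
  rw [lp.inner_eq_tsum, eval]
  exact tsum_congr fun n => by simp [coe_kernel hw, mul_comm]

theorem eq_zero_of_eval_eq_zero {f : H2} (h : ∀ z : ℂ, ‖z‖ < 1 → eval f z = 0) : f = 0 :=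
  lp.ext <| eq_zero_of_tsum_mul_pow_eq_zero (fun n => lp.norm_apply_le_norm two_ne_zero f n) h

theorem dense_span_kernel :
    Dense (Submodule.span ℂ (Set.range fun w : {w : ℂ // ‖w‖ < 1} => kernel w) : Set H2) := by
  rw [Submodule.dense_iff_topologicalClosure_eq_top, Submodule.topologicalClosure_eq_top_iff,
    Submodule.eq_bot_iff]
  intro f hf
  refine eq_zero_of_eval_eq_zero fun z hz => ?_
  rw [← inner_kernel f hz]
  exact hf _ (Submodule.subset_span ⟨⟨z, hz⟩, rfl⟩)

variable {p lam : ℂ}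

theorem ofReal_sqrt_one_sub_norm_sq_sq (hp : ‖p‖ < 1) :
    ((√(1 - ‖p‖ ^ 2) : ℝ) : ℂ) ^ 2 = 1 - conj p * p := by
  rw [← ofReal_pow, Real.sq_sqrt (by nlinarith [norm_nonneg p]), conj_mul']
  push_cast
  ring

theorem ofReal_sqrt_one_sub_norm_sq_ne_zero (hp : ‖p‖ < 1) : ((√(1 - ‖p‖ ^ 2) : ℝ) : ℂ) ≠ 0 :=
  ofReal_ne_zero.mpr (Real.sqrt_pos.mpr (by nlinarith [norm_nonneg p])).ne'

theorem xi_ne_zero (hp : ‖p‖ < 1) {z : ℂ} (hz : ‖z‖ < 1) : xi p z ≠ 0 :=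
  div_ne_zero (ofReal_sqrt_one_sub_norm_sq_ne_zero hp)
    (one_sub_mul_ne_zero_of_norm_lt_one (by simpa using hp) hz.le)

theorem one_sub_conj_tau_mul_tau (hp : ‖p‖ < 1) (hlam : ‖lam‖ = 1) {a b : ℂ} (ha : ‖a‖ < 1)
    (hb : ‖b‖ < 1) :
    1 - conj (tau p lam a) * tau p lam b = conj (xi p a) * xi p b * (1 - conj a * b) := by
  have hs := ofReal_sqrt_one_sub_norm_sq_sq hp
  have hlam' : conj lam * lam = 1 := by rw [conj_mul', hlam]; norm_num
  have hpa : 1 - conj a * p ≠ 0 := one_sub_mul_ne_zero_of_norm_lt_one (by simpa using ha) hp.le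
  have hpb : 1 - conj p * b ≠ 0 := one_sub_mul_ne_zero_of_norm_lt_one (by simpa using hp) hb.le
  simp only [tau, xi, map_div₀, map_mul, map_sub, map_one, conj_conj, conj_ofReal]
  field_simp
  rw [hs]
  linear_combination -((conj p - conj a) * (p - b)) * hlam'

theorem norm_tau_lt_one (hp : ‖p‖ < 1) (hlam : ‖lam‖ = 1) {z : ℂ} (hz : ‖z‖ < 1) :
    ‖tau p lam z‖ < 1 := by
  have h := one_sub_conj_tau_mul_tau hp hlam hz hz
  rw [conj_mul', conj_mul', conj_mul'] at h
  have h' : 1 - ‖tau p lam z‖ ^ 2 = ‖xi p z‖ ^ 2 * (1 - ‖z‖ ^ 2) := by exact_mod_cast h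
  have hxi : 0 < ‖xi p z‖ := norm_pos_iff.mpr (xi_ne_zero hp hz)
  have hz2 : 0 < 1 - ‖z‖ ^ 2 := by nlinarith [norm_nonneg z]
  nlinarith [norm_nonneg (tau p lam z), mul_pos (pow_pos hxi 2) hz2]

theorem tau_conj_tau (hp : ‖p‖ < 1) (hlam : ‖lam‖ = 1) (h : lam * p = conj p) {z : ℂ}
    (hz : ‖z‖ < 1) : tau p lam (conj (tau p lam z)) = conj z := by
  have hlam' : conj lam * lam = 1 := by rw [conj_mul', hlam]; norm_num
  have h' : conj lam * conj p = p := by simpa using congrArg conj h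
  have hpz : 1 - p * conj z ≠ 0 := one_sub_mul_ne_zero_of_norm_lt_one hp (by simpa using hz.le)
  have hpτ : 1 - conj p * conj (tau p lam z) ≠ 0 := one_sub_mul_ne_zero_of_norm_lt_one
    (by simpa using hp) (by simpa using (norm_tau_lt_one hp hlam hz).le)
  rw [tau, div_eq_iff hpτ]
  simp only [tau, map_div₀, map_mul, map_sub, map_one, conj_conj]
  field_simp
  linear_combination (1 - p * conj z) * h - (conj p - conj z) * hlam' +
    conj z * (conj p - conj z) * h'

theorem xi_mul_conj_xi_conj_tau (hp : ‖p‖ < 1) (h : lam * p = conj p) {z : ℂ} (hz : ‖z‖ < 1) :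
    xi p z * conj (xi p (conj (tau p lam z))) = 1 := by
  have hpz : 1 - conj p * z ≠ 0 := one_sub_mul_ne_zero_of_norm_lt_one (by simpa using hp) hz.le
  have hden : (1 - conj p * z) * (1 - p * tau p lam z) = ((√(1 - ‖p‖ ^ 2) : ℝ) : ℂ) ^ 2 := by
    rw [ofReal_sqrt_one_sub_norm_sq_sq hp, tau]
    field_simp
    linear_combination (z - p) * h
  simp only [xi, map_div₀, map_mul, map_sub, map_one, conj_conj, conj_ofReal]
  rw [div_mul_div_comm, ← sq, hden,
    div_self (pow_ne_zero 2 (ofReal_sqrt_one_sub_norm_sq_ne_zero hp))]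

/-- `J W_{ξ_p,τ_p} k_w`. -/
def jwKernel (p lam w : ℂ) : H2 := conj (xi p (conj w)) • kernel (tau p lam (conj w))

theorem inner_jwKernel (hp : ‖p‖ < 1) (hlam : ‖lam‖ = 1) {v w : ℂ} (hv : ‖v‖ < 1)
    (hw : ‖w‖ < 1) : ⟪jwKernel p lam v, jwKernel p lam w⟫_ℂ = ⟪kernel w, kernel v⟫_ℂ := by
  have hv' : ‖conj v‖ < 1 := by simpa using hv
  have hw' : ‖conj w‖ < 1 := by simpa using hw
  have hξv : xi p (conj v) ≠ 0 := xi_ne_zero hp hv'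
  have hξw : conj (xi p (conj w)) ≠ 0 := (map_ne_zero _).mpr (xi_ne_zero hp hw')
  have hwv : 1 - w * conj v ≠ 0 := one_sub_mul_ne_zero_of_norm_lt_one hw hv'.le
  rw [jwKernel, jwKernel, inner_smul_left, inner_smul_right, conj_conj,
    inner_kernel _ (norm_tau_lt_one hp hlam hv'),
    eval_kernel (norm_tau_lt_one hp hlam hw') (norm_tau_lt_one hp hlam hv'),
    one_sub_conj_tau_mul_tau hp hlam hw' hv', inner_kernel _ hw, eval_kernel hv hw, conj_conj]
  field_simp

theorem exists_isConjugation_isJW (hp : ‖p‖ < 1) (hlam : ‖lam‖ = 1) (h : lam * p = conj p) :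
    ∃ C : H2 → H2, IsConjugation C ∧ IsJW p lam C := by
  obtain ⟨C, hCk, hC⟩ := exists_conjLinear_extension_of_inner_eq dense_span_kernel
    (g := fun w : {w : ℂ // ‖w‖ < 1} => jwKernel p lam w)
    fun v w => inner_jwKernel hp hlam v.2 w.2
  have hCk' : ∀ {w : ℂ}, ‖w‖ < 1 → C (kernel w) = jwKernel p lam w := fun hw => hCk ⟨_, hw⟩
  have hCC_kernel : ∀ {w : ℂ}, ‖w‖ < 1 → C (C (kernel w)) = kernel w := by
    intro w hw
    have hw' : ‖conj w‖ < 1 := by simpa using hw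
    rw [hCk' hw, jwKernel, map_smulₛₗ, hCk' (norm_tau_lt_one hp hlam hw'), jwKernel, smul_smul,
      conj_conj, tau_conj_tau hp hlam h hw', conj_conj, xi_mul_conj_xi_conj_tau hp h hw',
      one_smul]
  have hCC : ∀ x, C (C x) = x := fun x => DFunLike.congr_fun
    (ContinuousLinearMap.ext_on dense_span_kernel (f := C.comp C)
      (g := ContinuousLinearMap.id ℂ H2) (by rintro _ ⟨w, rfl⟩; exact hCC_kernel w.2)) x
  refine ⟨C, ⟨map_add C, C.map_smulₛₗ, hCC, hC⟩, fun f z hz => ?_⟩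
  have hz' : ‖conj z‖ < 1 := by simpa using hz
  rw [← inner_kernel _ hz, ← hCC (kernel z), hC, hCk' hz, jwKernel, inner_smul_right,
    ← inner_conj_symm, inner_kernel _ (norm_tau_lt_one hp hlam hz'), map_mul]

theorem lam_mul_eq_conj_of_isJW (hp : ‖p‖ < 1) (hlam : ‖lam‖ = 1) {C : H2 → H2}
    (hCC : ∀ x, C (C x) = x) (hC : IsJW p lam C) : lam * p = conj p := by
  have hone : ∀ {z : ℂ}, ‖z‖ < 1 → eval (kernel 0) z = 1 := fun hz => by
    simp [eval_kernel (w := 0) (by simp) hz]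
  have hlp : ‖lam * p‖ < 1 := by rwa [norm_mul, hlam, one_mul]
  have htau : tau p lam 0 = lam * p := by simp [tau]
  have h1 := congrArg (eval · 0) (hCC (kernel 0))
  rw [hC _ _ (by simp), map_zero, htau, hC _ _ hlp,
    hone (norm_tau_lt_one hp hlam (by simpa using hlp)), hone (by simp), mul_one, map_mul,
    conj_conj, xi, xi, mul_zero, sub_zero, div_one, conj_ofReal, ← mul_div_assoc, ← sq,
    ofReal_sqrt_one_sub_norm_sq_sq hp, div_eq_one_iff_eq
      (one_sub_mul_ne_zero_of_norm_lt_one (by simpa using hp) (by simpa using hlp.le))] at h1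
  have h2 : conj p * (conj (lam * p) - p) = 0 := by linear_combination h1
  rcases mul_eq_zero.mp h2 with hp0 | hlp'
  · simp [(map_eq_zero _).mp hp0]
  · simpa using congrArg conj (sub_eq_zero.mp hlp')

end H2

/-- Lemma 2.2: for `p ∈ 𝔻` and `|λ| = 1`, the conjugate-linear map `J W_{ξ_p, τ_p}` given by
`f ↦ conj (ξ_p (conj z) * f (τ_p (conj z)))` is a conjugation on `H²` iff `λ p = conj p`. -/
theorem stmt15 (p lam : ℂ) (hp : ‖p‖ < 1) (hlam : ‖lam‖ = 1) :
    (∃ C : H2 → H2, H2.IsConjugation C ∧ H2.IsJW p lam C) ↔ lam * p = conj p :=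
  ⟨fun ⟨_, hC, hJW⟩ => H2.lam_mul_eq_conj_of_isJW hp hlam hC.invol hJW,
    H2.exists_isConjugation_isJW hp hlam⟩
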